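/- With notation as in the context, assume T is finite and rad β̃ = {e, f} for some element f ≠ e (necessarily f² = e and f ∈ T⁺). Let η, η': T → Fˣ take values in {1, −1}, satisfy η(ab) = β̃(a,b)η(a)η(b) and η'(ab) = β̃(a,b)η'(a)η'(b) for all a, b ∈ T, and satisfy η(f) = η'(f) = −1. Let t_p and t_p' be parity elements with η(t_p) = 1 and η'(t_p') = 1. Then t_p = t_p' if and only if there exists t₀ ∈ T⁺ such that η'(s) = β̃(t₀, s)η(s) for all s ∈ T. -/

import Mathlib

/-!
Package `β̃` as a skew-symmetric bicharacter `B : T →* T →* Fˣ` whose kernel (the radical) is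
`{1, f}`. The quotient `μ = η' / η` of two functions with `η (a b) = B a b η a η b` is a character
with `μ f = 1`. Characters trivial on the radical all have the form `B t₀`, by counting:
there are at most `|T / rad|` characters of `T / rad`, and `B` has `|T / rad|` values.
If `t_p = t_p'` then `B t₀ t_p = μ t_p = 1`, which for a parity element `t_p` says `p t₀ = 0`.
Conversely, two parity elements differ by an element of the radical, so `t_p' ∈ {t_p, t_p f}`;
an even `t₀` with `η' = B t₀ · η` gives `η' t_p = 1`, whereas `η' (t_p f) = η' t_p η' f = -1`.
-/

/-- The skew-symmetric bicharacter `β̃(t,s) = (−1)^{p(t)p(s)} β(t,s)`. -/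
def btilde {F T : Type*} [Field F] [CommGroup T]
    (β : T → T → Fˣ) (p : T → ZMod 2) : T → T → Fˣ :=
  fun t s => (-1 : Fˣ) ^ ((p t).val * (p s).val) * β t s

theorem natCard_monoidHom_units_le (G F : Type*) [Monoid G] [Finite G] [Field F] :
    Nat.card (G →* Fˣ) ≤ Nat.card G := by
  cases nonempty_fintype G
  have hli : LinearIndependent F fun χ : G →* Fˣ => ⇑((Units.coeHom F).comp χ) :=
    (linearIndependent_monoidHom G F).comp _ fun χ ψ h =>
      MonoidHom.ext fun g => Units.ext (DFunLike.congr_fun h g)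
  have := hli.finite
  cases nonempty_fintype (G →* Fˣ)
  simpa only [Nat.card_eq_fintype_card, Module.finrank_fintype_fun_eq_card] using
    hli.fintype_card_le_finrank

theorem exists_eq_of_ker_le_ker {T F : Type*} [CommGroup T] [Finite T] [Field F]
    (B : T →* T →* Fˣ) (hB : ∀ t s, B t s * B s t = 1) {χ : T →* Fˣ}
    (hχ : B.ker ≤ χ.ker) : ∃ t, B t = χ := by
  set S : Set (T →* Fˣ) := {ψ | B.ker ≤ ψ.ker}
  have hrange : Set.range B ⊆ S := by
    rintro _ ⟨t, rfl⟩ k hk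
    simpa [MonoidHom.mem_ker.mp hk] using hB k t
  have hcard : Nat.card S ≤ Nat.card (Set.range B) := calc
    Nat.card S = Nat.card (T ⧸ B.ker →* Fˣ) :=
      Nat.card_congr <| (Equiv.subtypeEquivRight fun ψ => by
          rw [QuotientGroup.ker_mk']; exact Iff.rfl).trans
        ((QuotientGroup.mk' B.ker).liftOfSurjective (QuotientGroup.mk'_surjective _))
    _ ≤ Nat.card (T ⧸ B.ker) := natCard_monoidHom_units_le _ _
    _ = Nat.card (Set.range B) :=
      Nat.card_congr <| (QuotientGroup.quotientKerEquivRange B).toEquiv.trans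
        (Equiv.setCongr B.coe_range)
  obtain ⟨t, ht⟩ : χ ∈ Set.range B :=
    (Set.eq_of_subset_of_ncard_le hrange (by simpa only [Nat.card_coe_set_eq] using hcard)
      (Set.toFinite S)).symm ▸ hχ
  exact ⟨t, ht⟩

section Bicharacter

variable {T M : Type*} [CommGroup T] [CommGroup M] {B : T →* T →* M}

theorem eq_or_eq_mul_of_apply_eq {f t t' : T} (hker : (B.ker : Set T) = {1, f})
    (h : B t = B t') : t' = t ∨ t' = t * f := by
  have hmem : t' * t⁻¹ ∈ (B.ker : Set T) := by
    rw [SetLike.mem_coe, MonoidHom.mem_ker, map_mul, map_inv, h, mul_inv_cancel]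
  rw [hker] at hmem
  rcases hmem with h1 | h1
  · exact Or.inl (mul_inv_eq_one.mp h1)
  · exact Or.inr ((mul_inv_eq_iff_eq_mul.mp h1).trans (mul_comm _ _))

variable {η η' : T → M}

theorem map_one_of_apply_mul_eq (hη : ∀ a b, η (a * b) = B a b * η a * η b) : η 1 = 1 := by
  simpa using hη 1 1

def ratioHom (hη : ∀ a b, η (a * b) = B a b * η a * η b)
    (hη' : ∀ a b, η' (a * b) = B a b * η' a * η' b) : T →* M where
  toFun s := η' s / η s
  map_one' := by rw [map_one_of_apply_mul_eq hη, map_one_of_apply_mul_eq hη', div_one]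
  map_mul' a b := by
    rw [hη, hη', mul_div_mul_comm, mul_div_mul_comm, div_self', one_mul]

end Bicharacter

section Sign

variable {M : Type*} [Monoid M] [HasDistribNeg M]

theorem neg_one_pow_val_add_mul (x y z : ZMod 2) :
    (-1 : M) ^ ((x + y).val * z.val) = (-1) ^ (x.val * z.val) * (-1) ^ (y.val * z.val) := by
  fin_cases x <;> fin_cases y <;> fin_cases z <;> simp +decide [ZMod.val]

theorem neg_one_pow_val_mul_add (x y z : ZMod 2) :
    (-1 : M) ^ (x.val * (y + z).val) = (-1) ^ (x.val * y.val) * (-1) ^ (x.val * z.val) := by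
  fin_cases x <;> fin_cases y <;> fin_cases z <;> simp +decide [ZMod.val]

theorem neg_one_pow_val_mul_swap (x y : ZMod 2) :
    (-1 : M) ^ (x.val * y.val) * (-1) ^ (y.val * x.val) = 1 := by
  fin_cases x <;> fin_cases y <;> simp +decide [ZMod.val]

theorem neg_one_pow_val_eq_one_iff (h : (-1 : M) ≠ 1) (x : ZMod 2) :
    (-1 : M) ^ x.val = 1 ↔ x = 0 := by
  rw [← ZMod.val_eq_zero]
  obtain hx | hx : x.val = 0 ∨ x.val = 1 := by have := ZMod.val_lt x; omega
  · simp [hx]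
  · simpa [hx] using h

end Sign

theorem mul_swap_eq_one_of_apply_self_eq_one {T M : Type*} [Mul T] [CommMonoid M]
    {β : T → T → M} (hβ1 : ∀ t s s', β t (s * s') = β t s * β t s')
    (hβ2 : ∀ t t' s, β (t * t') s = β t s * β t' s) (halt : ∀ t, β t t = 1) (t s : T) :
    β t s * β s t = 1 := by
  have h := halt (t * s)
  rwa [hβ2, hβ1, hβ1, halt, halt, one_mul, mul_one] at h

section Btilde

variable {F T : Type*} [Field F] [CommGroup T] {β : T → T → Fˣ} {p : T → ZMod 2}

theorem btilde_mul_left (hβ2 : ∀ t t' s, β (t * t') s = β t s * β t' s)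
    (hp : ∀ a b, p (a * b) = p a + p b) (t t' s : T) :
    btilde β p (t * t') s = btilde β p t s * btilde β p t' s := by
  rw [btilde, hβ2, hp, neg_one_pow_val_add_mul]
  exact mul_mul_mul_comm _ _ _ _

theorem btilde_mul_right (hβ1 : ∀ t s s', β t (s * s') = β t s * β t s')
    (hp : ∀ a b, p (a * b) = p a + p b) (t s s' : T) :
    btilde β p t (s * s') = btilde β p t s * btilde β p t s' := by
  rw [btilde, hβ1, hp, neg_one_pow_val_mul_add]
  exact mul_mul_mul_comm _ _ _ _

theorem btilde_mul_btilde_swap (hβ1 : ∀ t s s', β t (s * s') = β t s * β t s')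
    (hβ2 : ∀ t t' s, β (t * t') s = β t s * β t' s) (halt : ∀ t, β t t = 1) (t s : T) :
    btilde β p t s * btilde β p s t = 1 := by
  rw [btilde, btilde, mul_mul_mul_comm, neg_one_pow_val_mul_swap,
    mul_swap_eq_one_of_apply_self_eq_one hβ1 hβ2 halt, one_mul]

def btildeHom (hβ1 : ∀ t s s', β t (s * s') = β t s * β t s')
    (hβ2 : ∀ t t' s, β (t * t') s = β t s * β t' s) (hp : ∀ a b, p (a * b) = p a + p b) :
    T →* T →* Fˣ :=
  MonoidHom.mk' (fun t => MonoidHom.mk' (btilde β p t) (btilde_mul_right hβ1 hp t))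
    fun t t' => MonoidHom.ext (btilde_mul_left hβ2 hp t t')

end Btilde

section Parity

variable {F T : Type*} [Field F] [CommGroup T]

def IsParityElement (B : T →* T →* Fˣ) (p : T → ZMod 2) (t : T) : Prop :=
  ∀ s, B t s = (-1 : Fˣ) ^ (p s).val

variable {B : T →* T →* Fˣ} {p : T → ZMod 2} {f : T} {η η' : T → Fˣ}

theorem exists_eq_mul_of_isParityElement [Finite T] (hskew : ∀ t s, B t s * B s t = 1)
    (hneg : (-1 : Fˣ) ≠ 1) (hker : (B.ker : Set T) = {1, f})
    (hη : ∀ a b, η (a * b) = B a b * η a * η b) (hη' : ∀ a b, η' (a * b) = B a b * η' a * η' b)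
    (hηf : η f = -1) (hη'f : η' f = -1) {tp : T} (htp : IsParityElement B p tp)
    (hηtp : η tp = 1) (hη'tp : η' tp = 1) :
    ∃ t₀, p t₀ = 0 ∧ ∀ s, η' s = B t₀ s * η s := by
  obtain ⟨t₀, ht₀⟩ := exists_eq_of_ker_le_ker B hskew (χ := ratioHom hη hη') fun t ht => by
    rw [← SetLike.mem_coe, hker] at ht
    rcases ht with rfl | rfl
    · exact map_one _
    · simp [ratioHom, hηf, hη'f]
  have hB : ∀ s, B t₀ s = η' s / η s := fun s => DFunLike.congr_fun ht₀ s
  refine ⟨t₀, (neg_one_pow_val_eq_one_iff hneg _).mp ?_, fun s => ?_⟩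
  · simpa [← htp t₀, hB, hηtp, hη'tp] using hskew tp t₀
  · rw [← div_eq_iff_eq_mul, hB]

theorem eq_of_isParityElement (hskew : ∀ t s, B t s * B s t = 1) (hneg : (-1 : Fˣ) ≠ 1)
    (hker : (B.ker : Set T) = {1, f}) (hη' : ∀ a b, η' (a * b) = B a b * η' a * η' b)
    (hη'f : η' f = -1) {tp tp' : T} (htp : IsParityElement B p tp)
    (htp' : IsParityElement B p tp') (hηtp : η tp = 1) (hη'tp' : η' tp' = 1) {t₀ : T}
    (hpt₀ : p t₀ = 0) (ht₀ : ∀ s, η' s = B t₀ s * η s) : tp = tp' := by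
  have hη'tp : η' tp = 1 := by
    simpa [ht₀, hηtp, htp t₀, hpt₀] using hskew t₀ tp
  have hBf : B tp f = 1 := by
    have hf : B f = 1 := by
      rw [← MonoidHom.mem_ker, ← SetLike.mem_coe, hker]
      exact Or.inr rfl
    simpa [hf] using hskew tp f
  rcases eq_or_eq_mul_of_apply_eq hker (MonoidHom.ext fun s => (htp s).trans (htp' s).symm)
    with h | rfl
  · exact h.symm
  · rw [hη', hBf, hη'tp, hη'f, one_mul, one_mul] at hη'tp'
    exact (hneg hη'tp').elim

end Parity

theorem stmt_14_general {F T : Type*} [Field F] (h2 : (2 : F) ≠ 0) [CommGroup T] [Fintype T]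
    (β : T → T → Fˣ)
    (hβ1 : ∀ t s s', β t (s * s') = β t s * β t s')
    (hβ2 : ∀ t t' s, β (t * t') s = β t s * β t' s)
    (halt : ∀ t, β t t = 1)
    (p : T → ZMod 2) (hp : ∀ a b, p (a * b) = p a + p b)
    (f : T)
    (hrad : {t : T | ∀ s, btilde β p t s = 1} = {1, f})
    (η η' : T → Fˣ)
    (hη : ∀ a b, η (a * b) = btilde β p a b * η a * η b)
    (hη' : ∀ a b, η' (a * b) = btilde β p a b * η' a * η' b)
    (hηf : η f = -1) (hη'f : η' f = -1)
    (tp tp' : T)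
    (htp : ∀ t, btilde β p tp t = (-1 : Fˣ) ^ (p t).val) (hηtp : η tp = 1)
    (htp' : ∀ t, btilde β p tp' t = (-1 : Fˣ) ^ (p t).val) (hη'tp' : η' tp' = 1) :
    tp = tp' ↔ ∃ t₀ : T, p t₀ = 0 ∧ ∀ s, η' s = btilde β p t₀ s * η s := by
  set B := btildeHom hβ1 hβ2 hp
  have hskew : ∀ t s, B t s * B s t = 1 := btilde_mul_btilde_swap hβ1 hβ2 halt
  have hker : (B.ker : Set T) = {1, f} := by
    rw [← hrad]
    ext t
    exact MonoidHom.mem_ker.trans DFunLike.ext_iff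
  have hneg : (-1 : Fˣ) ≠ 1 := fun h =>
    h2 (by simpa [one_add_one_eq_two] using neg_eq_iff_add_eq_zero.mp (congrArg Units.val h))
  constructor
  · rintro rfl
    exact exists_eq_mul_of_isParityElement hskew hneg hker hη hη' hηf hη'f htp hηtp hη'tp'
  · rintro ⟨t₀, hpt₀, ht₀⟩
    exact eq_of_isParityElement hskew hneg hker hη' hη'f htp htp' hηtp hη'tp' hpt₀ ht₀

/-- Assume `T` is finite and `rad β̃ = {e, f}` with `f ≠ e`. Let
`η, η' : T → Fˣ` take values in `{±1}`, satisfy `η(ab) = β̃(a,b) η(a) η(b)` (and likewise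
for `η'`), and `η(f) = η'(f) = −1`. Let `t_p`, `t_p'` be parity elements with
`η(t_p) = 1` and `η'(t_p') = 1`. Then `t_p = t_p'` iff there exists `t₀ ∈ T⁺` such that
`η'(s) = β̃(t₀, s) η(s)` for all `s ∈ T`. -/
theorem stmt_14 {F T : Type*} [Field F] (h2 : (2 : F) ≠ 0) [CommGroup T] [Fintype T]
    (β : T → T → Fˣ)
    (hβ1 : ∀ t s s', β t (s * s') = β t s * β t s')
    (hβ2 : ∀ t t' s, β (t * t') s = β t s * β t' s)
    (halt : ∀ t, β t t = 1)
    (p : T → ZMod 2) (hp : ∀ a b, p (a * b) = p a + p b)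
    (f : T) (hf : f ≠ 1)
    (hrad : {t : T | ∀ s, btilde β p t s = 1} = {1, f})
    (η η' : T → Fˣ)
    (hηval : ∀ t, η t = 1 ∨ η t = -1)
    (hη'val : ∀ t, η' t = 1 ∨ η' t = -1)
    (hη : ∀ a b, η (a * b) = btilde β p a b * η a * η b)
    (hη' : ∀ a b, η' (a * b) = btilde β p a b * η' a * η' b)
    (hηf : η f = -1) (hη'f : η' f = -1)
    (tp tp' : T)
    (htp : ∀ t, btilde β p tp t = (-1 : Fˣ) ^ (p t).val) (hηtp : η tp = 1)
    (htp' : ∀ t, btilde β p tp' t = (-1 : Fˣ) ^ (p t).val) (hη'tp' : η' tp' = 1) :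
    tp = tp' ↔ ∃ t₀ : T, p t₀ = 0 ∧ ∀ s, η' s = btilde β p t₀ s * η s :=
  stmt_14_general h2 β hβ1 hβ2 halt p hp f hrad η η' hη hη' hηf hη'f tp tp' htp hηtp htp' hη'tp'
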